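/- arXiv:2008.07648 — 8 statements merged into one kernel-verified Lean document; each statement's English description precedes it below -/
import Mathlib

section
/- Let A* ∈ ℝ^{d×d} be entrywise nonnegative and invertible, let B* ∈ ℝ^{m×d}, and let C ∈ ℝ^{d×m}. If C·y(x) − x ≥ 0 holds entrywise for every x ∈ ℝ^d, then the matrix C·B* ∈ ℝ^{d×d} is diagonal. -/
open MeasureTheory Matrix

/-- Entrywise rectifier (ReLU). -/
def relu {k : ℕ} (v : Fin k → ℝ) : Fin k → ℝ := fun i => max (v i) 0

/-- The ground-truth residual unit. -/
def resUnit {d m : ℕ} (A : Matrix (Fin d) (Fin d) ℝ) (B : Matrix (Fin m) (Fin d) ℝ)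
    (x : Fin d → ℝ) : Fin m → ℝ :=
  B.mulVec (relu (A.mulVec x) + x)

theorem stmt2 (d m : ℕ) (hd : 1 ≤ d) (hm : d ≤ m)
    (Astar : Matrix (Fin d) (Fin d) ℝ) (Bstar : Matrix (Fin m) (Fin d) ℝ)
    (hAnn : ∀ i j, 0 ≤ Astar i j) (hAinv : IsUnit Astar.det)
    (C : Matrix (Fin d) (Fin m) ℝ)
    (hC : ∀ x : Fin d → ℝ, ∀ i, x i ≤ C.mulVec (resUnit Astar Bstar x) i) :
    (C * Bstar).IsDiag := by
  set M := C * Bstar with hM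
  have hC' : ∀ x : Fin d → ℝ, ∀ i,
      x i ≤ M.mulVec (relu (Astar.mulVec x) + x) i := by
    intro x i
    have h := hC x i
    simpa [resUnit, Matrix.mulVec_mulVec, hM] using h
  -- P := (1 - M) * Astar⁻¹ is entrywise nonnegative
  set P : Matrix (Fin d) (Fin d) ℝ := (1 - M) * Astar⁻¹ with hP
  have hPA : P * Astar = 1 - M := by
    rw [hP, Matrix.mul_assoc, Matrix.nonsing_inv_mul _ hAinv, Matrix.mul_one]
  have hPnn : ∀ i k, 0 ≤ P i k := by
    intro i k
    set u : Fin d → ℝ := Astar⁻¹.mulVec (Pi.single k 1) with hu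
    have hAu : Astar.mulVec u = Pi.single k 1 := by
      rw [hu, Matrix.mulVec_mulVec, Matrix.mul_nonsing_inv _ hAinv, Matrix.one_mulVec]
    have hrelu : relu (Astar.mulVec (-u)) = 0 := by
      funext l
      simp [relu, Matrix.mulVec_neg, hAu, Pi.single_apply]
      split <;> norm_num
    have h := hC' (-u) i
    rw [hrelu, zero_add] at h
    have h' : M.mulVec u i ≤ u i := by
      have := h
      simp only [Matrix.mulVec_neg, Pi.neg_apply] at this
      linarith
    have hPu : ((1 - M).mulVec u) i = P i k := by
      rw [hu, Matrix.mulVec_mulVec]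
      have : ((1 - M) * Astar⁻¹).mulVec (Pi.single k 1) i = P i k := by
        rw [← hP, Matrix.mulVec_single]
        simp
      exact this
    have : 0 ≤ ((1 - M).mulVec u) i := by
      rw [Matrix.sub_mulVec, Matrix.one_mulVec]
      simpa using sub_nonneg.mpr h'
    linarith [hPu ▸ this]
  intro i j hij
  -- step 1: 0 ≤ M i j
  have h1 : 0 ≤ M i j := by
    set u : Fin d → ℝ := Astar⁻¹.mulVec (Pi.single j 1) with hu
    have hAu : Astar.mulVec u = Pi.single j 1 := by
      rw [hu, Matrix.mulVec_mulVec, Matrix.mul_nonsing_inv _ hAinv, Matrix.one_mulVec]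
    have hreluP : relu (Astar.mulVec u) = Pi.single j 1 := by
      funext l
      simp [relu, hAu, Pi.single_apply]
      split <;> norm_num
    have hreluN : relu (Astar.mulVec (-u)) = 0 := by
      funext l
      simp [relu, Matrix.mulVec_neg, hAu, Pi.single_apply]
      split <;> norm_num
    have ha := hC' u i
    rw [hreluP] at ha
    have hb := hC' (-u) i
    rw [hreluN, zero_add] at hb
    have ha' : u i ≤ M i j + M.mulVec u i := by
      have : M.mulVec (Pi.single j 1 + u) i = M i j + M.mulVec u i := by
        rw [Matrix.mulVec_add, Matrix.mulVec_single]
        simp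
      linarith [this ▸ ha]
    have hb' : -u i ≤ -(M.mulVec u i) := by
      simpa [Matrix.mulVec_neg] using hb
    linarith
  -- step 2: M i j ≤ 0
  have h2 : M i j ≤ 0 := by
    have hentry : (1 - M) i j = -(M i j) := by
      simp [Matrix.sub_apply, Matrix.one_apply_ne hij]
    have : 0 ≤ (P * Astar) i j := by
      rw [Matrix.mul_apply]
      exact Finset.sum_nonneg fun k _ => mul_nonneg (hPnn i k) (hAnn k j)
    rw [hPA, hentry] at this
    linarith
  linarith
end

section
/- Let A* ∈ ℝ^{d×d} be entrywise nonnegative and invertible and let B* ∈ ℝ^{m×d}. For C ∈ ℝ^{d×m}, the inequality C·y(x) − x ≥ 0 holds entrywise for every x ∈ ℝ^d if and only if C·B* = diag(k) for some k ∈ ℝ^d such that, for each j: (a) if A* is a scale transformation with respect to the j-th component, then 1/(1 + A*_{j,j}) ≤ k_j ≤ 1; and (b) if A* is not a scale transformation with respect to the j-th component, then k_j = 1. -/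
open MeasureTheory Matrix

/-- `A` is a scale transformation with respect to the `j`-th component:
all off-diagonal entries of the `j`-th row vanish. -/
def IsScaleTransform {d : ℕ} (A : Matrix (Fin d) (Fin d) ℝ) (j : Fin d) : Prop :=
  ∀ j', j' ≠ j → A j j' = 0

/-!
Write `M = C * B*`, so that `C y(x) = M (A* x)⁺ + M x`. Substituting `x = A*⁻¹ z` turns the
inequality into `0 ≤ M z⁺ + N z` with `N = (M - 1) A*⁻¹`; testing it on `z = ± e_j` gives
`N ≤ 0 ≤ M + N`, and then `M - 1 = N A* ≤ 0` forces `M` to be diagonal, `M = diag k`.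
The inequality then splits into one condition per row `a` of `A*`:
`x_j ≤ k_j (a ⬝ x)⁺ + k_j x_j` for all `x`. If `a` is supported at `j` this is a scalar inequality
in `x_j`, which holds exactly when `1 ≤ k_j (1 + a_j)` and `k_j ≤ 1`; otherwise some `x` has
`a ⬝ x = 0` and `x_j = ± 1`, forcing `k_j = 1`.
-/

theorem mulVec_resUnit {d m : ℕ} (A : Matrix (Fin d) (Fin d) ℝ) (B : Matrix (Fin m) (Fin d) ℝ)
    (C : Matrix (Fin d) (Fin m) ℝ) (x : Fin d → ℝ) :
    C *ᵥ resUnit A B x = (C * B) *ᵥ relu (A *ᵥ x) + (C * B) *ᵥ x := by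
  rw [resUnit, mulVec_mulVec, mulVec_add]

theorem relu_single {d : ℕ} (j : Fin d) (t : ℝ) :
    relu (Pi.single j t) = Pi.single j (max t 0) :=
  funext <| Pi.apply_single (fun _ s => max s 0) (fun _ => max_self 0) j t (M := fun _ => ℝ)

theorem Matrix.isDiag_of_sub_one_eq_mul {ι R : Type*} [Fintype ι] [DecidableEq ι] [CommRing R]
    [LinearOrder R] [IsStrictOrderedRing R] {A M N : Matrix ι ι R}
    (hA : ∀ i j, 0 ≤ A i j) (hN : ∀ i j, N i j ≤ 0) (hMN : ∀ i j, 0 ≤ M i j + N i j)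
    (hMNA : M - 1 = N * A) : M.IsDiag := by
  intro i j hij
  have hM : M i j = (N * A) i j := by
    simpa [one_apply_ne hij] using congrFun (congrFun hMNA i) j
  have hM_nonpos : M i j ≤ 0 := by
    rw [hM, mul_apply]
    exact Finset.sum_nonpos fun l _ => mul_nonpos_of_nonpos_of_nonneg (hN i l) (hA l j)
  linarith [hN i j, hMN i j]

theorem isDiag_of_forall_le_mulVec_relu {d : ℕ} {A M : Matrix (Fin d) (Fin d) ℝ}
    (hA : ∀ i j, 0 ≤ A i j) (hAdet : IsUnit A.det)
    (h : ∀ x i, x i ≤ (M *ᵥ relu (A *ᵥ x) + M *ᵥ x) i) : M.IsDiag := by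
  set N := (M - 1) * A⁻¹
  -- At `x = A⁻¹ z` the hypothesis reads `0 ≤ M relu z + N z`; test it on `z = ± e_j`.
  have hcol : ∀ j t i, 0 ≤ M i j * max t 0 + N i j * t := by
    intro j t i
    have hx := h (A⁻¹ *ᵥ Pi.single j t) i
    have hNz : N *ᵥ Pi.single j t = M *ᵥ A⁻¹ *ᵥ Pi.single j t - A⁻¹ *ᵥ Pi.single j t := by
      rw [← mulVec_mulVec, sub_mulVec, one_mulVec]
    have hNz_i := congrFun hNz i
    rw [mulVec_mulVec, mul_nonsing_inv _ hAdet, one_mulVec, relu_single] at hx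
    simp only [mulVec_single, Pi.add_apply, Pi.sub_apply, Pi.smul_apply, col_apply,
      op_smul_eq_mul] at hx hNz_i
    linarith
  have hN : ∀ i j, N i j ≤ 0 := fun i j => by simpa using hcol j (-1) i
  have hMN : ∀ i j, 0 ≤ M i j + N i j := fun i j => by simpa using hcol j 1 i
  refine isDiag_of_sub_one_eq_mul hA hN hMN ?_
  rw [Matrix.mul_assoc, nonsing_inv_mul _ hAdet, Matrix.mul_one]

theorem forall_le_mul_max_mul_iff {a k : ℝ} (ha : 0 ≤ a) :
    (∀ t : ℝ, t ≤ k * max (a * t) 0 + k * t) ↔ 1 / (1 + a) ≤ k ∧ k ≤ 1 := by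
  rw [div_le_iff₀ (by linarith)]
  constructor
  · intro h
    have h₁ := h 1
    have h₂ := h (-1)
    rw [mul_one, max_eq_left ha] at h₁
    rw [mul_neg_one, max_eq_right (by linarith)] at h₂
    constructor <;> linarith
  · rintro ⟨hlow, hup⟩ t
    rcases le_total 0 t with ht | ht
    · rw [max_eq_left (mul_nonneg ha ht)]
      nlinarith
    · rw [max_eq_right (mul_nonpos_of_nonneg_of_nonpos ha ht)]
      nlinarith

theorem forall_le_mul_max_dotProduct_iff {ι : Type*} [Fintype ι] [DecidableEq ι] {a : ι → ℝ}
    {i : ι} (ha : 0 ≤ a i) (k : ℝ) :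
    (∀ x : ι → ℝ, x i ≤ k * max (a ⬝ᵥ x) 0 + k * x i) ↔
      ((∀ l, l ≠ i → a l = 0) → 1 / (1 + a i) ≤ k ∧ k ≤ 1) ∧
        (¬ (∀ l, l ≠ i → a l = 0) → k = 1) := by
  by_cases hscale : ∀ l, l ≠ i → a l = 0
  · have hdot : ∀ x, a ⬝ᵥ x = a i * x i := fun x =>
      Finset.sum_eq_single i (fun l _ hl => by rw [hscale l hl, zero_mul]) (by simp)
    have hrow : (∀ x : ι → ℝ, x i ≤ k * max (a ⬝ᵥ x) 0 + k * x i) ↔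
        ∀ t : ℝ, t ≤ k * max (a i * t) 0 + k * t := by
      simp only [hdot]
      exact ⟨fun h t => by simpa using h (Pi.single i t), fun h x => h (x i)⟩
    rw [hrow, forall_le_mul_max_mul_iff ha]
    tauto
  · suffices (∀ x : ι → ℝ, x i ≤ k * max (a ⬝ᵥ x) 0 + k * x i) ↔ k = 1 by tauto
    push Not at hscale
    obtain ⟨l, hli, hal⟩ := hscale
    refine ⟨fun h => ?_, fun hk x => by simp [hk]⟩
    -- Choosing `x l` to cancel `a i * x i` makes the rectifier vanish.
    have hle : ∀ s, s ≤ k * s := fun s => by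
      set x : ι → ℝ := Pi.single i s - Pi.single l (a i * s / a l)
      have hxi : x i = s := by simp [x, hli.symm]
      have hdot : a ⬝ᵥ x = 0 := by
        simp only [x, dotProduct_sub, dotProduct_single]
        field_simp
        ring
      simpa [hxi, hdot] using h x
    linarith [hle 1, hle (-1)]

theorem stmt3_general (d m : ℕ)
    (Astar : Matrix (Fin d) (Fin d) ℝ) (Bstar : Matrix (Fin m) (Fin d) ℝ)
    (hAnn : ∀ i j, 0 ≤ Astar i j) (hAinv : IsUnit Astar.det)
    (C : Matrix (Fin d) (Fin m) ℝ) :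
    (∀ x : Fin d → ℝ, ∀ i, x i ≤ C.mulVec (resUnit Astar Bstar x) i) ↔
      ∃ k : Fin d → ℝ, C * Bstar = Matrix.diagonal k ∧
        ∀ j : Fin d,
          (IsScaleTransform Astar j → 1 / (1 + Astar j j) ≤ k j ∧ k j ≤ 1) ∧
          (¬ IsScaleTransform Astar j → k j = 1) := by
  simp only [mulVec_resUnit]
  constructor
  · intro h
    obtain ⟨k, hk⟩ : ∃ k, C * Bstar = diagonal k :=
      ⟨_, (isDiag_of_forall_le_mulVec_relu hAnn hAinv h).diagonal_diag.symm⟩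
    refine ⟨k, hk, fun j => (forall_le_mul_max_dotProduct_iff (hAnn j j) _).1 fun x => ?_⟩
    have hx := h x j
    rwa [hk, Pi.add_apply, mulVec_diagonal, mulVec_diagonal] at hx
  · rintro ⟨k, hk, hrow⟩ x i
    rw [hk, Pi.add_apply, mulVec_diagonal, mulVec_diagonal]
    exact (forall_le_mul_max_dotProduct_iff (hAnn i i) (k i)).2 (hrow i) x

theorem stmt3 (d m : ℕ) (hd : 1 ≤ d) (hm : d ≤ m)
    (Astar : Matrix (Fin d) (Fin d) ℝ) (Bstar : Matrix (Fin m) (Fin d) ℝ)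
    (hAnn : ∀ i j, 0 ≤ Astar i j) (hAinv : IsUnit Astar.det)
    (C : Matrix (Fin d) (Fin m) ℝ) :
    (∀ x : Fin d → ℝ, ∀ i, x i ≤ C.mulVec (resUnit Astar Bstar x) i) ↔
      ∃ k : Fin d → ℝ, C * Bstar = Matrix.diagonal k ∧
        ∀ j : Fin d,
          (IsScaleTransform Astar j → 1 / (1 + Astar j j) ≤ k j ∧ k j ≤ 1) ∧
          (¬ IsScaleTransform Astar j → k j = 1) :=
  stmt3_general d m Astar Bstar hAnn hAinv C
end

section
/- Let A* ∈ ℝ^{d×d} be entrywise nonnegative and invertible, let B* ∈ ℝ^{m×d}, and let C ∈ ℝ^{d×m} satisfy C·B* = diag(k) where k ∈ ℝ^d is such that for each j: if A* is a scale transformation with respect to the j-th component then 1/(1 + A*_{j,j}) ≤ k_j ≤ 1, and otherwise k_j = 1. Then for every index j the following three statements are equivalent: (1) A* is a scale transformation with respect to the j-th component; (2) there is a constant c ∈ ℝ such that (C·y(x))_j = c·x_j for every x ∈ ℝ^d with x_j < 0; (3) there is a constant c' ∈ ℝ such that (C·y(x))_j = c'·x_j for every x ∈ ℝ^d with x_j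 > 0. Moreover, if (1) holds, then the constant c in (2) equals k_j. -/
open MeasureTheory Matrix

theorem stmt4 (d m : ℕ) (hd : 1 ≤ d) (hm : d ≤ m)
    (Astar : Matrix (Fin d) (Fin d) ℝ) (Bstar : Matrix (Fin m) (Fin d) ℝ)
    (hAnn : ∀ i j, 0 ≤ Astar i j) (hAinv : IsUnit Astar.det)
    (C : Matrix (Fin d) (Fin m) ℝ) (k : Fin d → ℝ)
    (hCB : C * Bstar = Matrix.diagonal k)
    (hk : ∀ j : Fin d,
      (IsScaleTransform Astar j → 1 / (1 + Astar j j) ≤ k j ∧ k j ≤ 1) ∧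
      (¬ IsScaleTransform Astar j → k j = 1)) :
    ∀ j : Fin d,
      (IsScaleTransform Astar j ↔
        ∃ c : ℝ, ∀ x : Fin d → ℝ, x j < 0 → C.mulVec (resUnit Astar Bstar x) j = c * x j) ∧
      (IsScaleTransform Astar j ↔
        ∃ c' : ℝ, ∀ x : Fin d → ℝ, 0 < x j → C.mulVec (resUnit Astar Bstar x) j = c' * x j) ∧
      (IsScaleTransform Astar j →
        ∀ x : Fin d → ℝ, x j < 0 → C.mulVec (resUnit Astar Bstar x) j = k j * x j) := by
  have key : ∀ (x : Fin d → ℝ) (j : Fin d), C.mulVec (resUnit Astar Bstar x) j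
      = k j * (max (Astar.mulVec x j) 0 + x j) := by
    intro x j
    rw [resUnit, Matrix.mulVec_mulVec, hCB]
    simp [Matrix.mulVec_diagonal, relu]
  intro j
  have hscale : IsScaleTransform Astar j → ∀ x : Fin d → ℝ,
      Astar.mulVec x j = Astar j j * x j := by
    intro h x
    rw [Matrix.mulVec, show (Astar j ⬝ᵥ x) = ∑ i, Astar j i * x i from rfl,
      Finset.sum_eq_single j]
    · intro b _ hb; rw [h b hb]; ring
    · intro h'; exact absurd (Finset.mem_univ j) h'
  -- the key computation when scale transform and x j < 0
  have hneg : IsScaleTransform Astar j →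
      ∀ x : Fin d → ℝ, x j < 0 → C.mulVec (resUnit Astar Bstar x) j = k j * x j := by
    intro h x hx
    rw [key, hscale h, max_eq_right (mul_nonpos_of_nonneg_of_nonpos (hAnn j j) hx.le)]
    ring
  -- get a bad column when not a scale transform
  have hbad : ∀ (P : Prop), ¬ IsScaleTransform Astar j →
      (∀ j', j' ≠ j → 0 < Astar j j' → P) → P := by
    intro P hns hP
    by_contra hnp
    apply hns
    intro j' hj'
    by_contra hA
    exact hnp (hP j' hj' (lt_of_le_of_ne (hAnn j j') (Ne.symm hA)))
  refine ⟨⟨fun h => ⟨k j, hneg h⟩, ?_⟩, ⟨fun h => ?_, ?_⟩, hneg⟩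
  · rintro ⟨c, hc⟩
    by_contra hns
    refine hbad _ hns (fun j' hj' hApos => ?_)
    have hk1 : k j = 1 := (hk j).2 hns
    have smv : ∀ (i : Fin d) (a : ℝ), Astar.mulVec (Pi.single i a) j = Astar j i * a := by
      intro i a
      simp [Matrix.mulVec_single]
    have hxj : ((Pi.single j (-1:ℝ) + Pi.single j' ((Astar j j + 1) / Astar j j') : Fin d → ℝ)) j = -1 := by
      rw [Pi.add_apply, Pi.single_eq_same, Pi.single_eq_of_ne hj'.symm, add_zero]
    have hx0j : (Pi.single j (-1:ℝ) : Fin d → ℝ) j = -1 := Pi.single_eq_same j (-1)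
    have hmv : Astar.mulVec ((Pi.single j (-1:ℝ) + Pi.single j' ((Astar j j + 1) / Astar j j') : Fin d → ℝ)) j
        = Astar j j * (-1) + Astar j j' * ((Astar j j + 1) / Astar j j') := by
      rw [Matrix.mulVec_add, Pi.add_apply, smv, smv]
    have hmv0 : Astar.mulVec (Pi.single j (-1:ℝ)) j = Astar j j * (-1) := smv j (-1)
    have htval : Astar j j' * ((Astar j j + 1) / Astar j j') = Astar j j + 1 := by
      field_simp
    have h0 : C.mulVec (resUnit Astar Bstar (Pi.single j (-1:ℝ))) j = -1 := by
      rw [key, hmv0, hx0j, hk1]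
      rw [max_eq_right (by nlinarith [hAnn j j])]
      ring
    have h1 : C.mulVec (resUnit Astar Bstar
        ((Pi.single j (-1:ℝ) + Pi.single j' ((Astar j j + 1) / Astar j j') : Fin d → ℝ))) j = 0 := by
      rw [key, hmv, hxj, hk1, htval]
      rw [max_eq_left (by linarith)]
      ring
    have e0 := hc (Pi.single j (-1:ℝ)) (by rw [hx0j]; norm_num)
    have e1 := hc ((Pi.single j (-1:ℝ) + Pi.single j' ((Astar j j + 1) / Astar j j') : Fin d → ℝ)) (by rw [hxj]; norm_num)
    rw [h0, hx0j] at e0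
    rw [h1, hxj] at e1
    nlinarith
  · refine ⟨k j * (1 + Astar j j), fun x hx => ?_⟩
    rw [key, hscale h, max_eq_left (mul_nonneg (hAnn j j) hx.le)]
    ring
  · rintro ⟨c, hc⟩
    by_contra hns
    refine hbad _ hns (fun j' hj' hApos => ?_)
    have hk1 : k j = 1 := (hk j).2 hns
    have smv : ∀ (i : Fin d) (a : ℝ), Astar.mulVec (Pi.single i a) j = Astar j i * a := by
      intro i a
      simp [Matrix.mulVec_single]
    have hxj : ((Pi.single j (1:ℝ) + Pi.single j' (1:ℝ) : Fin d → ℝ)) j = 1 := by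
      rw [Pi.add_apply, Pi.single_eq_same, Pi.single_eq_of_ne hj'.symm, add_zero]
    have hx0j : (Pi.single j (1:ℝ) : Fin d → ℝ) j = 1 := Pi.single_eq_same j 1
    have hmv : Astar.mulVec ((Pi.single j (1:ℝ) + Pi.single j' (1:ℝ) : Fin d → ℝ)) j
        = Astar j j * 1 + Astar j j' * 1 := by
      rw [Matrix.mulVec_add, Pi.add_apply, smv, smv]
    have hmv0 : Astar.mulVec (Pi.single j (1:ℝ)) j = Astar j j * 1 := smv j 1
    have h0 : C.mulVec (resUnit Astar Bstar (Pi.single j (1:ℝ))) j = Astar j j + 1 := by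
      rw [key, hmv0, hx0j, hk1, max_eq_left (by nlinarith [hAnn j j])]
      ring
    have h1 : C.mulVec (resUnit Astar Bstar ((Pi.single j (1:ℝ) + Pi.single j' (1:ℝ) : Fin d → ℝ))) j
        = Astar j j + Astar j j' + 1 := by
      rw [key, hmv, hxj, hk1, max_eq_left (by nlinarith [hAnn j j])]
      ring
    have e0 := hc (Pi.single j (1:ℝ)) (by rw [hx0j]; norm_num)
    have e1 := hc ((Pi.single j (1:ℝ) + Pi.single j' (1:ℝ) : Fin d → ℝ)) (by rw [hxj]; norm_num)
    rw [h0, hx0j] at e0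
    rw [h1, hxj] at e1
    nlinarith
end

section
/- Let A* ∈ ℝ^{d×d} be entrywise nonnegative and invertible, and let μ be a probability measure on ℝ^d with full support. Then for every A ∈ ℝ^{d×d} and every continuous r : ℝ^d → ℝ^d with r(x) ≥ 0 for all x, the (possibly infinite) integral G₁(A,r) = (1/2)∫ ‖r(x) + A·x − (A*x)⁺‖² dμ(x) equals 0 if and only if there exists k ∈ ℝ^d with 0 ≤ k_j ≤ 1 for each j such that the j-th row of A equals k_j times the j-th row of A* for every j (equivalently, A = diag(k)·A*), and r(x) = (A*x)⁺ − A·x for all x ∈ ℝ^d. -/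
open MeasureTheory Matrix

lemma dp_self_nonneg {d : ℕ} (v : Fin d → ℝ) : 0 ≤ v ⬝ᵥ v :=
  Finset.sum_nonneg fun _ _ => mul_self_nonneg _

lemma halfspace {d : ℕ} (a b : Fin d → ℝ) (hb : b ≠ 0)
    (h : ∀ x, a ⬝ᵥ x ≤ max (b ⬝ᵥ x) 0) :
    ∃ k : ℝ, 0 ≤ k ∧ k ≤ 1 ∧ a = k • b := by
  have hbb : 0 < b ⬝ᵥ b := by
    rcases lt_or_eq_of_le (dp_self_nonneg b) with h' | h'
    · exact h'
    · exact absurd (dotProduct_self_eq_zero.mp h'.symm) hb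
  set c : ℝ := (a ⬝ᵥ b) / (b ⬝ᵥ b) with hc
  set w : Fin d → ℝ := a - c • b with hw
  have hwb : w ⬝ᵥ b = 0 := by
    rw [hw, sub_dotProduct, smul_dotProduct, smul_eq_mul, hc,
      div_mul_cancel₀ _ hbb.ne', sub_self]
  have hbw : b ⬝ᵥ w = 0 := by rw [dotProduct_comm]; exact hwb
  have hweq : w = 0 := by
    by_contra hwne
    have hww : 0 < w ⬝ᵥ w := by
      rcases lt_or_eq_of_le (dp_self_nonneg w) with h' | h'
      · exact h'
      · exact absurd (dotProduct_self_eq_zero.mp h'.symm) hwne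
    set t : ℝ := (w ⬝ᵥ w) / (2 * (|c| + 1) * (b ⬝ᵥ b)) with ht
    have htpos : 0 < t := by
      apply div_pos hww
      positivity
    have hx := h (w - t • b)
    have hax : a ⬝ᵥ (w - t • b) = w ⬝ᵥ w - c * t * (b ⬝ᵥ b) := by
      have ha : a = w + c • b := by rw [hw]; abel
      rw [ha]
      simp only [add_dotProduct, smul_dotProduct, dotProduct_sub, dotProduct_smul,
        hwb, hbw, smul_eq_mul]
      ring
    have hbx : b ⬝ᵥ (w - t • b) = -(t * (b ⬝ᵥ b)) := by
      rw [dotProduct_sub, dotProduct_smul, hbw, smul_eq_mul]; ring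
    rw [hax, hbx] at hx
    have hmax : max (-(t * (b ⬝ᵥ b))) 0 = 0 := by
      apply max_eq_right
      nlinarith
    rw [hmax] at hx
    have hct : c * t * (b ⬝ᵥ b) = c * (w ⬝ᵥ w) / (2 * (|c| + 1)) := by
      rw [ht]; field_simp
    rw [hct] at hx
    have h2 : c * (w ⬝ᵥ w) / (2 * (|c| + 1)) < w ⬝ᵥ w := by
      rw [div_lt_iff₀ (by positivity)]
      nlinarith [abs_nonneg c, le_abs_self c]
    linarith
  have haeq : a = c • b := by
    rw [hw] at hweq; exact sub_eq_zero.mp hweq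
  refine ⟨c, ?_, ?_, haeq⟩
  · have h1 := h (-b)
    rw [haeq] at h1
    simp only [smul_dotProduct, dotProduct_neg, smul_eq_mul] at h1
    have hmax : max (-(b ⬝ᵥ b)) 0 = 0 := max_eq_right (by linarith)
    rw [hmax] at h1
    nlinarith
  · have h1 := h b
    rw [haeq] at h1
    simp only [smul_dotProduct, smul_eq_mul] at h1
    have hmax : max (b ⬝ᵥ b) 0 = b ⬝ᵥ b := max_eq_left hbb.le
    rw [hmax] at h1
    nlinarith


theorem stmt5 (d : ℕ) (hd : 1 ≤ d)
    (Astar : Matrix (Fin d) (Fin d) ℝ)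
    (hAnn : ∀ i j, 0 ≤ Astar i j) (hAinv : IsUnit Astar.det)
    (μ : Measure (Fin d → ℝ)) [IsProbabilityMeasure μ]
    (hsupp : ∀ U : Set (Fin d → ℝ), IsOpen U → U.Nonempty → 0 < μ U)
    (A : Matrix (Fin d) (Fin d) ℝ)
    (r : (Fin d → ℝ) → Fin d → ℝ)
    (hcont : Continuous r) (hpos : ∀ x i, 0 ≤ r x i) :
    (∫⁻ x, ENNReal.ofReal
        (2⁻¹ * ∑ i, (r x i + A.mulVec x i - relu (Astar.mulVec x) i) ^ 2) ∂μ) = 0 ↔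
      (∃ k : Fin d → ℝ, (∀ j, 0 ≤ k j ∧ k j ≤ 1) ∧
          (∀ j j', A j j' = k j * Astar j j') ∧ A = Matrix.diagonal k * Astar) ∧
        ∀ x : Fin d → ℝ, r x = relu (Astar.mulVec x) - A.mulVec x := by
  set g : (Fin d → ℝ) → ℝ :=
    fun x => 2⁻¹ * ∑ i, (r x i + A.mulVec x i - relu (Astar.mulVec x) i) ^ 2 with hg
  have hgnn : ∀ x, 0 ≤ g x := fun x => by
    apply mul_nonneg (by norm_num)
    exact Finset.sum_nonneg fun i _ => sq_nonneg _
  have hmvcont : ∀ (M : Matrix (Fin d) (Fin d) ℝ) (i : Fin d),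
      Continuous fun x : Fin d → ℝ => M.mulVec x i := by
    intro M i
    simp only [Matrix.mulVec, dotProduct]
    exact continuous_finset_sum _ fun j _ => (continuous_const.mul (continuous_apply j))
  have hgcont : Continuous g := by
    apply continuous_const.mul
    apply continuous_finset_sum
    intro i _
    apply Continuous.pow
    exact (((continuous_apply i).comp hcont).add (hmvcont A i)).sub
      ((hmvcont Astar i).max continuous_const)
  constructor
  · intro h0
    -- step 1: g = 0 everywhere
    have hmeas : Measurable fun x => ENNReal.ofReal (g x) :=
      (ENNReal.continuous_ofReal.comp hgcont).measurable
    have hae : ∀ᵐ x ∂μ, ENNReal.ofReal (g x) = 0 :=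
      (lintegral_eq_zero_iff hmeas).mp h0
    have hae0 : ∀ᵐ x ∂μ, g x = 0 := by
      filter_upwards [hae] with x hx
      have := ENNReal.ofReal_eq_zero.mp hx
      linarith [hgnn x]
    have hgzero : ∀ x, g x = 0 := by
      by_contra hne
      push_neg at hne
      obtain ⟨x0, hx0⟩ := hne
      have hU : IsOpen {x | g x ≠ 0} := isOpen_compl_singleton.preimage hgcont
      have := hsupp _ hU ⟨x0, hx0⟩
      have hμ0 : μ {x | g x ≠ 0} = 0 := hae0
      rw [hμ0] at this
      exact lt_irrefl _ this
    -- step 2: pointwise identity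
    have hid : ∀ x i, r x i + A.mulVec x i - relu (Astar.mulVec x) i = 0 := by
      intro x i
      have hx := hgzero x
      rw [hg] at hx
      have hsum : ∑ i, (r x i + A.mulVec x i - relu (Astar.mulVec x) i) ^ 2 = 0 := by
        simpa using hx
      have := (Finset.sum_eq_zero_iff_of_nonneg (fun i _ => sq_nonneg _)).mp hsum i
        (Finset.mem_univ i)
      exact pow_eq_zero_iff (by norm_num) |>.mp this
    have hr : ∀ x, r x = relu (Astar.mulVec x) - A.mulVec x := by
      intro x
      funext i
      have := hid x i
      simp only [Pi.sub_apply]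
      linarith
    refine ⟨?_, hr⟩
    -- step 3: halfspace argument for each row
    have hrow : ∀ j, ∃ k : ℝ, 0 ≤ k ∧ k ≤ 1 ∧ (fun j' => A j j') = k • (fun j' => Astar j j') := by
      intro j
      apply halfspace
      · intro hz
        have : Astar.det = 0 := Matrix.det_eq_zero_of_row_eq_zero j (fun j' => congrFun hz j')
        rw [this] at hAinv
        exact (by simpa using hAinv : False)
      · intro x
        have h1 := hid x j
        have h2 := hpos x j
        have : A.mulVec x j ≤ relu (Astar.mulVec x) j := by linarith
        simpa [Matrix.mulVec, relu] using this
    choose k hk0 hk1 hkeq using hrow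
    refine ⟨k, fun j => ⟨hk0 j, hk1 j⟩, ?_, ?_⟩
    · intro j j'
      have := congrFun (hkeq j) j'
      simpa using this
    · ext i j
      have := congrFun (hkeq i) j
      simp [Matrix.diagonal_mul]
      simpa using this
  · rintro ⟨⟨k, hk, hAk, hdiag⟩, hr⟩
    have : ∀ x, g x = 0 := by
      intro x
      rw [hg]
      have : ∀ i, r x i + A.mulVec x i - relu (Astar.mulVec x) i = 0 := by
        intro i
        rw [hr x]
        simp [Pi.sub_apply]
      simp [this]
    have hz : ∀ x, ENNReal.ofReal (g x) = 0 := fun x => by rw [this x]; simp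
    calc (∫⁻ x, ENNReal.ofReal (g x) ∂μ) = ∫⁻ _, 0 ∂μ := lintegral_congr hz
      _ = 0 := lintegral_zero
end

section
/- Let a*, a ∈ ℝ^d. Then ⟨a, x⟩ ≤ max(⟨a*, x⟩, 0) holds for every x ∈ ℝ^d if and only if there exists k ∈ ℝ with 0 ≤ k ≤ 1 such that a = k·a*. -/
/-! Applying the inequality to `x` and `-x` shows that `a` is orthogonal to `a*ᗮ`, hence
`a = k • a*`. When `a* ≠ 0`, `⟪a*, x⟫` takes every real value `t`, so the condition becomes
`k * t ≤ max t 0` for all `t`, which is `0 ≤ k ≤ 1`. -/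

open RealInnerProductSpace

theorem mul_le_max_zero_iff {α : Type*} [Field α] [LinearOrder α] [IsStrictOrderedRing α]
    (k : α) : (∀ t : α, k * t ≤ max t 0) ↔ 0 ≤ k ∧ k ≤ 1 := by
  refine ⟨fun h => ⟨?_, ?_⟩, fun ⟨hk0, hk1⟩ t => ?_⟩
  · simpa using h (-1)
  · simpa using h 1
  · rcases le_total 0 t with ht | ht
    · exact (mul_le_of_le_one_left ht hk1).trans (le_max_left _ _)
    · exact (mul_nonpos_of_nonneg_of_nonpos hk0 ht).trans (le_max_right _ _)

section InnerProductSpace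

variable {E : Type*} [NormedAddCommGroup E] [InnerProductSpace ℝ E]

theorem exists_eq_smul_of_forall_inner_eq_zero_imp {v a : E}
    (h : ∀ x, ⟪v, x⟫ = 0 → ⟪a, x⟫ = 0) : ∃ k : ℝ, a = k • v := by
  have ha : a ∈ (ℝ ∙ v)ᗮᗮ := fun x hx => by
    rw [real_inner_comm]
    exact h x (Submodule.mem_orthogonal_singleton_iff_inner_right.mp hx)
  rw [Submodule.orthogonal_orthogonal] at ha
  obtain ⟨k, rfl⟩ := Submodule.mem_span_singleton.mp ha
  exact ⟨k, rfl⟩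

theorem exists_inner_eq_of_ne_zero {v : E} (hv : v ≠ 0) (t : ℝ) : ∃ x, ⟪v, x⟫ = t :=
  ⟨(t / ⟪v, v⟫) • v, by
    rw [real_inner_smul_right, div_mul_cancel₀ _ (inner_self_ne_zero.mpr hv)]⟩

theorem inner_le_max_inner_zero_iff (astar a : E) :
    (∀ x, ⟪a, x⟫ ≤ max ⟪astar, x⟫ 0) ↔ ∃ k : ℝ, 0 ≤ k ∧ k ≤ 1 ∧ a = k • astar := by
  constructor
  · intro h
    have hker : ∀ x, ⟪astar, x⟫ = 0 → ⟪a, x⟫ = 0 := fun x hx => by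
      have hle := h x
      have hge := h (-x)
      simp only [inner_neg_right, hx, neg_zero, max_self] at hle hge
      linarith
    obtain ⟨k, rfl⟩ := exists_eq_smul_of_forall_inner_eq_zero_imp hker
    by_cases hastar : astar = 0
    · exact ⟨0, le_rfl, zero_le_one, by simp [hastar]⟩
    have hk : 0 ≤ k ∧ k ≤ 1 := (mul_le_max_zero_iff k).mp fun t => by
      obtain ⟨x, rfl⟩ := exists_inner_eq_of_ne_zero hastar t
      simpa only [real_inner_smul_left] using h x
    exact ⟨k, hk.1, hk.2, rfl⟩
  · rintro ⟨k, hk0, hk1, rfl⟩ x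
    rw [real_inner_smul_left]
    exact (mul_le_max_zero_iff k).mpr ⟨hk0, hk1⟩ _

end InnerProductSpace

theorem stmt7_general (d : ℕ) (astar a : Fin d → ℝ) :
    (∀ x : Fin d → ℝ, ∑ i, a i * x i ≤ max (∑ i, astar i * x i) 0) ↔
      ∃ k : ℝ, 0 ≤ k ∧ k ≤ 1 ∧ a = k • astar := by
  have hsum (v x : Fin d → ℝ) : ∑ i, v i * x i = ⟪WithLp.toLp 2 v, WithLp.toLp 2 x⟫ := by
    rw [real_inner_comm]
    rfl
  have h := inner_le_max_inner_zero_iff (WithLp.toLp 2 astar) (WithLp.toLp 2 a)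
  simp only [(WithLp.toLp_surjective 2).forall, ← WithLp.toLp_smul,
    (WithLp.toLp_injective 2).eq_iff, ← hsum] at h
  exact h

theorem stmt7 (d : ℕ) (hd : 1 ≤ d) (astar a : Fin d → ℝ) :
    (∀ x : Fin d → ℝ, ∑ i, a i * x i ≤ max (∑ i, astar i * x i) 0) ↔
      ∃ k : ℝ, 0 ≤ k ∧ k ≤ 1 ∧ a = k • astar :=
  stmt7_general d astar a
end

section
/- Let A* ∈ ℝ^{d×d}, let K ⊆ ℝ^{d×d} be a compact set of matrices, let μ be a probability measure on ℝ^d with ∫ ‖x‖² dμ(x) < ∞, and let X_1, X_2, … be i.i.d. ℝ^d-valued random vectors with law μ. Define f̂_n(A)(ω) = (1/(2n)) Σ_{i=1}^n ‖(A·X_i(ω) − (A*X_i(ω))⁺)⁺‖² and f(A) = (1/2)∫ ‖(A·x − (A*x)⁺)⁺‖² dμ(x). Then almost surely sup_{A ∈ K} |f̂_n(A) − f(A)| → 0 as n → ∞. -/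
open MeasureTheory Matrix ProbabilityTheory Filter

/-!
The empirical objective is the sample mean of the i.i.d. random elements `A ↦ g(A, Xᵢ)` of the
Banach space `C(K, ℝ)`. On the compact set `K` the loss is dominated by a constant times `‖x‖²`, since the
rectifiers only shrink `A x` coordinatewise, so these random elements are integrable and
Etemadi's strong law in `C(K, ℝ)` applies: the sample means converge almost surely in the sup
norm, which is uniform convergence on `K`.
-/

section UniformStrongLaw

variable {α T Ω : Type*} [TopologicalSpace α] [SecondCountableTopology α] [MeasurableSpace α]
  [OpensMeasurableSpace α]
  [TopologicalSpace T] [CompactSpace T] [MeasurableSpace Ω]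

theorem ae_tendstoUniformly_sampleMean {P : Measure Ω} {μ : Measure α}
    {G : α → T → ℝ} (hG : Continuous (Function.uncurry G))
    {B : α → ℝ} (hB : Integrable B μ) (hGB : ∀ x t, |G x t| ≤ B x)
    {X : ℕ → Ω → α} (hX : ∀ n, Measurable (X n))
    (hindep : Pairwise fun i j => IndepFun (X i) (X j) P) (hdist : ∀ n, P.map (X n) = μ) :
    ∀ᵐ ω ∂P, TendstoUniformly (fun (n : ℕ) t => (n : ℝ)⁻¹ * ∑ i ∈ Finset.range n, G (X i ω) t)
      (fun t => ∫ x, G x t ∂μ) atTop := by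
  borelize C(T, ℝ)
  set φ : α → C(T, ℝ) := ⇑(ContinuousMap.mk _ hG).curry
  have hφ : Continuous φ := map_continuous _
  have hφ_int : Integrable φ μ :=
    hB.abs.mono' hφ.aestronglyMeasurable <| ae_of_all _ fun x =>
      (ContinuousMap.norm_le _ (abs_nonneg _)).2 fun t => (hGB x t).trans (le_abs_self _)
  have hident : ∀ i, IdentDistrib (φ ∘ X i) (φ ∘ X 0) P P := fun i =>
    IdentDistrib.comp ⟨(hX i).aemeasurable, (hX 0).aemeasurable, (hdist i).trans (hdist 0).symm⟩
      hφ.measurable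
  have hint : Integrable (φ ∘ X 0) P := by
    rw [← integrable_map_measure _ (hX 0).aemeasurable, hdist 0]
    · exact hφ_int
    · exact hφ.aestronglyMeasurable
  have hmean : ∫ ω, φ (X 0 ω) ∂P = ∫ x, φ x ∂μ := by
    rw [← hdist 0, integral_map (hX 0).aemeasurable hφ.aestronglyMeasurable]
  filter_upwards [strong_law_ae (fun n => φ ∘ X n) hint
    (fun i j hij => (hindep hij).comp hφ.measurable hφ.measurable) hident] with ω hω
  rw [Function.comp_def, hmean, ContinuousMap.tendsto_iff_tendstoUniformly] at hω
  convert hω using 2 with n t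
  · simp [φ]
  · rw [ContinuousMap.integral_apply hφ_int]
    rfl

end UniformStrongLaw

theorem sq_max_sub_zero_le_sq {a c : ℝ} (hc : 0 ≤ c) : max (a - c) 0 ^ 2 ≤ a ^ 2 := by
  rw [← sq_abs a]
  exact pow_le_pow_left₀ (le_max_right _ _) (max_le (by linarith [le_abs_self a]) (abs_nonneg a)) 2

theorem Matrix.sum_sq_mulVec_le {m n : Type*} [Fintype m] [Fintype n] (A : Matrix m n ℝ)
    (x : n → ℝ) : ∑ i, (A *ᵥ x) i ^ 2 ≤ (∑ i, ∑ j, A i j ^ 2) * ∑ j, x j ^ 2 := by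
  rw [Finset.sum_mul]
  gcongr
  simpa [Matrix.mulVec, dotProduct] using Finset.sum_mul_sq_le_sq_mul_sq Finset.univ (A i) x

theorem Matrix.sum_sq_max_sub_max_le {m n : Type*} [Fintype m] [Fintype n]
    (A A' : Matrix m n ℝ) (x : n → ℝ) :
    ∑ i, max ((A *ᵥ x) i - max ((A' *ᵥ x) i) 0) 0 ^ 2 ≤ (∑ i, ∑ j, A i j ^ 2) * ∑ j, x j ^ 2 :=
  (Finset.sum_le_sum fun _ _ => sq_max_sub_zero_le_sq (le_max_right _ _)).trans
    (A.sum_sq_mulVec_le x)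

theorem stmt16_general (d : ℕ)
    (Astar : Matrix (Fin d) (Fin d) ℝ)
    (K : Set (Matrix (Fin d) (Fin d) ℝ)) (hK : IsCompact K)
    (μ : Measure (Fin d → ℝ))
    (hmom : Integrable (fun x : Fin d → ℝ => ∑ i, (x i) ^ 2) μ)
    (Ω : Type) [MeasurableSpace Ω] (P : Measure Ω)
    (X : ℕ → Ω → (Fin d → ℝ)) (hmeas : ∀ n, Measurable (X n))
    (hindep : iIndepFun X P)
    (hdist : ∀ n, P.map (X n) = μ) :
    -- single-sample loss
    let g : Matrix (Fin d) (Fin d) ℝ → (Fin d → ℝ) → ℝ :=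
      fun A x => ∑ i, (max (A.mulVec x i - max (Astar.mulVec x i) 0) 0) ^ 2
    -- empirical and population objectives
    let fhat : ℕ → Matrix (Fin d) (Fin d) ℝ → Ω → ℝ :=
      fun n A ω => (1 / (2 * (n : ℝ))) * ∑ i ∈ Finset.range n, g A (X i ω)
    let f : Matrix (Fin d) (Fin d) ℝ → ℝ :=
      fun A => 2⁻¹ * ∫ x, g A x ∂μ
    ∀ᵐ ω ∂P, TendstoUniformlyOn (fun n A => fhat n A ω) f atTop K := by
  intro g fhat f
  have : CompactSpace K := isCompact_iff_compactSpace.mp hK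
  have hfrob : Continuous fun A : Matrix (Fin d) (Fin d) ℝ => ∑ i, ∑ j, A i j ^ 2 := by
    fun_prop
  obtain ⟨M, hM⟩ := hK.bddAbove_image hfrob.continuousOn
  have hg : Continuous fun p : (Fin d → ℝ) × K => 2⁻¹ * g p.2 p.1 := by
    simp only [g]
    fun_prop
  have hgM : ∀ x (A : K), |2⁻¹ * g A x| ≤ M * ∑ i, x i ^ 2 := by
    intro x A
    have hg0 : 0 ≤ g A x := Finset.sum_nonneg fun i _ => sq_nonneg _
    rw [abs_of_nonneg (by positivity)]
    calc 2⁻¹ * g A x ≤ g A x := by linarith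
      _ ≤ (∑ i, ∑ j, (A : Matrix _ _ ℝ) i j ^ 2) * ∑ i, x i ^ 2 := by
          simp only [g]
          exact sum_sq_max_sub_max_le _ Astar x
      _ ≤ M * ∑ i, x i ^ 2 := by gcongr; exact hM ⟨A, A.2, rfl⟩
  filter_upwards [ae_tendstoUniformly_sampleMean hg (hmom.const_mul M) hgM hmeas
    (fun i j hij => hindep.indepFun hij) hdist] with ω hω
  rw [tendstoUniformlyOn_iff_tendstoUniformly_comp_coe]
  convert hω using 2 with n
  · ext A
    simp only [fhat, Finset.mul_sum]
    exact Finset.sum_congr rfl fun _ _ => by ring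
  · simp only [f, Function.comp_apply, integral_const_mul]

theorem stmt16 (d : ℕ) (hd : 1 ≤ d)
    (Astar : Matrix (Fin d) (Fin d) ℝ)
    (K : Set (Matrix (Fin d) (Fin d) ℝ)) (hK : IsCompact K)
    (μ : Measure (Fin d → ℝ)) [IsProbabilityMeasure μ]
    (hmom : Integrable (fun x : Fin d → ℝ => ∑ i, (x i) ^ 2) μ)
    (Ω : Type) [MeasurableSpace Ω] (P : Measure Ω) [IsProbabilityMeasure P]
    (X : ℕ → Ω → (Fin d → ℝ)) (hmeas : ∀ n, Measurable (X n))
    (hindep : iIndepFun X P)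
    (hdist : ∀ n, P.map (X n) = μ) :
    -- single-sample loss
    let g : Matrix (Fin d) (Fin d) ℝ → (Fin d → ℝ) → ℝ :=
      fun A x => ∑ i, (max (A.mulVec x i - max (Astar.mulVec x i) 0) 0) ^ 2
    -- empirical and population objectives
    let fhat : ℕ → Matrix (Fin d) (Fin d) ℝ → Ω → ℝ :=
      fun n A ω => (1 / (2 * (n : ℝ))) * ∑ i ∈ Finset.range n, g A (X i ω)
    let f : Matrix (Fin d) (Fin d) ℝ → ℝ :=
      fun A => 2⁻¹ * ∫ x, g A x ∂μ
    ∀ᵐ ω ∂P, TendstoUniformlyOn (fun n A => fhat n A ω) f atTop K :=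
  stmt16_general d Astar K hK μ hmom Ω P X hmeas hindep hdist
end

section
/- Let A* ∈ ℝ^{d×d} be entrywise nonnegative and invertible, let μ be a probability measure on ℝ^d with full support, and let X_1, X_2, … be i.i.d. with law μ. Define the random sets T̂_n(ω) = {A ∈ ℝ^{d×d} : A·X_i(ω) ≤ (A*X_i(ω))⁺ entrywise for all 1 ≤ i ≤ n} and the deterministic set T* = {diag(k)·A* : k ∈ ℝ^d, 0 ≤ k_j ≤ 1 for all j}. Then almost surely the Hausdorff distance between T̂_n(ω) and T* tends to 0 as n → ∞. -/
/-!
Almost surely the sample is dense, and the constraint `A x ≤ (A* x)⁺` is continuous in `x`, so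
the decreasing closed convex sets `T̂ₙ` intersect to `{A | ∀ x, A x ≤ (A* x)⁺}`; testing
`A A*⁻¹` on `± eⱼ` identifies this set with `T*`. Decreasing closed connected sets with compact
nonempty intersection `L` converge to `L` in Hausdorff distance: by Cantor's intersection theorem
they eventually miss the level set `{infDist · L = ε}`, and by connectedness they then stay in
the `ε`-neighbourhood of `L`.
-/

open MeasureTheory Matrix ProbabilityTheory Filter

attribute [local instance] Matrix.frobeniusNormedAddCommGroup

open Metric in
theorem tendsto_hausdorffDist_of_antitone {α : Type*} [MetricSpace α] [ProperSpace α]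
    {K : ℕ → Set α} {L : Set α} (hanti : Antitone K) (hclosed : ∀ n, IsClosed (K n))
    (hconn : ∀ n, IsPreconnected (K n)) (hL : ⋂ n, K n = L) (hcpt : IsCompact L)
    (hne : L.Nonempty) :
    Tendsto (fun n => hausdorffDist (K n) L) atTop (nhds 0) := by
  refine Metric.tendsto_atTop.2 fun ε hε => ?_
  have hlevel : IsClosed {x | infDist x L = ε / 2} :=
    isClosed_eq (continuous_infDist_pt L) continuous_const
  obtain ⟨N, hN⟩ : ∃ N, K N ∩ {x | infDist x L = ε / 2} = ∅ := by
    by_contra! h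
    obtain ⟨x, hx⟩ := IsCompact.nonempty_iInter_of_sequence_nonempty_isCompact_isClosed
      (fun n => K n ∩ {x | infDist x L = ε / 2})
      (fun n => Set.inter_subset_inter_left _ (hanti n.le_succ)) h
      ((hcpt.cthickening (r := ε)).of_isClosed_subset ((hclosed 0).inter hlevel)
        fun x hx => thickening_subset_cthickening ε L <|
          (mem_thickening_iff_infDist_lt hne).2 (by rw [hx.2]; linarith))
      fun n => (hclosed n).inter hlevel
    have hxL : x ∈ L := hL ▸ Set.mem_iInter.2 fun n => (Set.mem_iInter.1 hx n).1
    have hx0 : infDist x L = ε / 2 := (Set.mem_iInter.1 hx 0).2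
    rw [infDist_zero_of_mem hxL] at hx0
    linarith
  have hLK : ∀ n, L ⊆ K n := fun n => hL ▸ Set.iInter_subset K n
  obtain ⟨y, hy⟩ := hne
  refine ⟨N, fun n hn => ?_⟩
  have hnear : ∀ x ∈ K n, infDist x L < ε / 2 := by
    intro x hx
    by_contra! hfar
    obtain ⟨z, hz, hzε⟩ := (hconn n).intermediate_value (hLK n hy) hx
      (continuous_infDist_pt L).continuousOn
      ⟨by rw [infDist_zero_of_mem hy]; positivity, hfar⟩
    exact (Set.eq_empty_iff_forall_notMem.1 hN) z ⟨hanti hn hz, hzε⟩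
  have hle : hausdorffDist (K n) L ≤ ε / 2 :=
    hausdorffDist_le_of_infDist (by positivity) (fun x hx => (hnear x hx).le)
      fun x hx => by rw [infDist_zero_of_mem (hLK n hx)]; positivity
  rw [Real.dist_eq, sub_zero, abs_of_nonneg hausdorffDist_nonneg]
  linarith

section Sampling

variable {Ω α : Type*} [MeasurableSpace Ω] [MeasurableSpace α] {P : Measure Ω} {μ : Measure α}
  [IsProbabilityMeasure μ] {X : ℕ → Ω → α}

theorem ae_exists_mem_of_iIndepFun (hindep : iIndepFun X P) (hdist : ∀ n, P.map (X n) = μ)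
    {s : Set α} (hs : MeasurableSet s) (hμs : μ s ≠ 0) :
    ∀ᵐ ω ∂P, ∃ i, X i ω ∈ s := by
  have hX : ∀ i, AEMeasurable (X i) P := fun i => by
    by_contra h
    exact IsProbabilityMeasure.ne_zero μ (hdist i ▸ Measure.map_of_not_aemeasurable h)
  have hmiss : ∀ n, P (⋂ i ∈ Finset.range n, X i ⁻¹' sᶜ) = μ sᶜ ^ n := fun n => by
    rw [hindep.meas_biInter fun i _ => ⟨sᶜ, hs.compl, rfl⟩, Finset.prod_congr rfl fun i _ =>
      (hdist i ▸ Measure.map_apply_of_aemeasurable (hX i) hs.compl).symm, Finset.prod_const,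
      Finset.card_range]
  have hlt : μ sᶜ < 1 := by
    rw [prob_compl_eq_one_sub hs]
    exact ENNReal.sub_lt_self ENNReal.one_ne_top one_ne_zero hμs
  have hnever : P (⋂ i, X i ⁻¹' sᶜ) = 0 :=
    le_antisymm (ge_of_tendsto' (ENNReal.tendsto_pow_atTop_nhds_zero_of_lt_one hlt) fun n =>
      hmiss n ▸ measure_mono (Set.iInter_subset_iInter₂ _ _)) bot_le
  rw [ae_iff]
  convert hnever
  ext ω
  simp

theorem ae_denseRange_of_iIndepFun [TopologicalSpace α] [SecondCountableTopology α]
    [OpensMeasurableSpace α] [μ.IsOpenPosMeasure] (hindep : iIndepFun X P)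
    (hdist : ∀ n, P.map (X n) = μ) :
    ∀ᵐ ω ∂P, DenseRange fun i => X i ω := by
  obtain ⟨b, hbc, hbne, hbasis⟩ := TopologicalSpace.exists_countable_basis α
  have hhit : ∀ᵐ ω ∂P, ∀ U ∈ b, ∃ i, X i ω ∈ U := (ae_ball_iff hbc).2 fun U hU =>
    ae_exists_mem_of_iIndepFun hindep hdist (hbasis.isOpen hU).measurableSet
      ((hbasis.isOpen hU).measure_ne_zero μ (Set.nonempty_iff_ne_empty.2 fun h => hbne (h ▸ hU)))
  filter_upwards [hhit] with ω hω
  refine hbasis.dense_iff.2 fun U hU _ => ?_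
  obtain ⟨i, hi⟩ := hω U hU
  exact ⟨X i ω, hi, Set.mem_range_self i⟩

end Sampling

@[fun_prop]
theorem continuous_relu {k : ℕ} : Continuous (relu (k := k)) :=
  continuous_pi fun i => (continuous_apply i).max continuous_const

section FeasibleSets

variable {d : ℕ}

def rowScalings (Astar : Matrix (Fin d) (Fin d) ℝ) : Set (Matrix (Fin d) (Fin d) ℝ) :=
  {A | ∃ k : Fin d → ℝ, (∀ j, 0 ≤ k j ∧ k j ≤ 1) ∧ A = diagonal k * Astar}

theorem zero_mem_rowScalings (Astar : Matrix (Fin d) (Fin d) ℝ) : 0 ∈ rowScalings Astar :=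
  ⟨0, fun _ => ⟨le_rfl, zero_le_one⟩, by simp⟩

theorem isCompact_rowScalings (Astar : Matrix (Fin d) (Fin d) ℝ) :
    IsCompact (rowScalings Astar) := by
  have himage : rowScalings Astar = (fun k => diagonal k * Astar) '' Set.Icc 0 1 := by
    ext A
    simp [rowScalings, Pi.le_def, forall_and, eq_comm]
  rw [himage]
  exact isCompact_Icc.image (by fun_prop)

theorem mulVec_le_relu_of_mem_rowScalings {Astar A : Matrix (Fin d) (Fin d) ℝ}
    (hA : A ∈ rowScalings Astar) (x : Fin d → ℝ) (j : Fin d) :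
    (A *ᵥ x) j ≤ relu (Astar *ᵥ x) j := by
  obtain ⟨k, hk, rfl⟩ := hA
  rw [← mulVec_mulVec, mulVec_diagonal, relu]
  rcases le_total 0 ((Astar *ᵥ x) j) with h | h
  · exact le_max_of_le_left (mul_le_of_le_one_left h (hk j).2)
  · exact le_max_of_le_right (mul_nonpos_of_nonneg_of_nonpos (hk j).1 h)

theorem exists_eq_diagonal_of_mulVec_le_relu {B : Matrix (Fin d) (Fin d) ℝ}
    (hB : ∀ y j, (B *ᵥ y) j ≤ relu y j) :
    ∃ k : Fin d → ℝ, (∀ j, 0 ≤ k j ∧ k j ≤ 1) ∧ B = diagonal k := by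
  have hentry : ∀ a b, 0 ≤ B a b ∧ B a b ≤ if a = b then 1 else 0 := fun a b => by
    have hpos := hB (Pi.single b 1) a
    have hneg := hB (-Pi.single b 1) a
    simp only [mulVec_neg, mulVec_single, relu, Pi.neg_apply, Pi.single_apply] at hpos hneg
    split_ifs at hpos hneg ⊢ <;> simp_all
  refine ⟨fun j => B j j, fun j => by simpa using hentry j j, ?_⟩
  ext a b
  by_cases hab : a = b
  · simp [hab]
  · simpa [hab] using le_antisymm (by simpa [hab] using (hentry a b).2) (hentry a b).1

theorem mem_rowScalings_of_mulVec_le_relu {Astar A : Matrix (Fin d) (Fin d) ℝ}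
    (hAinv : IsUnit Astar.det) (hA : ∀ x j, (A *ᵥ x) j ≤ relu (Astar *ᵥ x) j) :
    A ∈ rowScalings Astar := by
  obtain ⟨k, hk, hdiag⟩ := exists_eq_diagonal_of_mulVec_le_relu (B := A * Astar⁻¹) fun y j => by
    simpa [mulVec_mulVec, mul_nonsing_inv _ hAinv] using hA (Astar⁻¹ *ᵥ y) j
  exact ⟨k, hk, by rw [← hdiag, nonsing_inv_mul_cancel_right _ _ hAinv]⟩

def empiricalFeasibleSet (Astar : Matrix (Fin d) (Fin d) ℝ) (x : ℕ → Fin d → ℝ) (n : ℕ) :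
    Set (Matrix (Fin d) (Fin d) ℝ) :=
  {A | ∀ i < n, ∀ j, (A *ᵥ x i) j ≤ relu (Astar *ᵥ x i) j}

variable (Astar : Matrix (Fin d) (Fin d) ℝ) (x : ℕ → Fin d → ℝ)

theorem antitone_empiricalFeasibleSet : Antitone (empiricalFeasibleSet Astar x) :=
  fun _ _ hmn _ hA i hi => hA i (hi.trans_le hmn)

theorem isClosed_empiricalFeasibleSet (n : ℕ) : IsClosed (empiricalFeasibleSet Astar x n) := by
  simp only [empiricalFeasibleSet, Set.ofPred_forall]
  exact isClosed_biInter fun i _ => isClosed_iInter fun j =>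
    isClosed_le (by fun_prop) continuous_const

theorem convex_empiricalFeasibleSet (n : ℕ) : Convex ℝ (empiricalFeasibleSet Astar x n) := by
  intro A hA B hB a b ha hb hab i hi j
  calc ((a • A + b • B) *ᵥ x i) j = a * (A *ᵥ x i) j + b * (B *ᵥ x i) j := by
        simp [add_mulVec, smul_mulVec]
    _ ≤ a * relu (Astar *ᵥ x i) j + b * relu (Astar *ᵥ x i) j := by
        gcongr
        exacts [hA i hi j, hB i hi j]
    _ = relu (Astar *ᵥ x i) j := by rw [← add_mul, hab, one_mul]

variable {Astar x}

theorem iInter_empiricalFeasibleSet (hAinv : IsUnit Astar.det) (hx : DenseRange x) :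
    ⋂ n, empiricalFeasibleSet Astar x n = rowScalings Astar := by
  ext A
  refine ⟨fun hA => mem_rowScalings_of_mulVec_le_relu hAinv fun y => ?_,
    fun hA => Set.mem_iInter.2 fun n i _ => mulVec_le_relu_of_mem_rowScalings hA (x i)⟩
  have hclosed : IsClosed {y | ∀ j, (A *ᵥ y) j ≤ relu (Astar *ᵥ y) j} := by
    simp only [Set.ofPred_forall]
    exact isClosed_iInter fun j => isClosed_le (by fun_prop) (by fun_prop)
  refine hclosed.closure_subset_iff.2 ?_ (hx y)
  rintro _ ⟨i, rfl⟩
  exact (Set.mem_iInter.1 hA (i + 1)) i i.lt_succ_self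

end FeasibleSets

attribute [local instance] Matrix.frobeniusNormedSpace

theorem stmt17_general (d : ℕ)
    (Astar : Matrix (Fin d) (Fin d) ℝ)
    (hAinv : IsUnit Astar.det)
    (μ : Measure (Fin d → ℝ)) [IsProbabilityMeasure μ]
    (hsupp : ∀ U : Set (Fin d → ℝ), IsOpen U → U.Nonempty → 0 < μ U)
    (Ω : Type) [MeasurableSpace Ω] (P : Measure Ω)
    (X : ℕ → Ω → (Fin d → ℝ))
    (hindep : iIndepFun X P)
    (hdist : ∀ n, P.map (X n) = μ) :
    let That : ℕ → Ω → Set (Matrix (Fin d) (Fin d) ℝ) := fun n ω =>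
      {A | ∀ i < n, ∀ j, A.mulVec (X i ω) j ≤ relu (Astar.mulVec (X i ω)) j}
    let Tstar : Set (Matrix (Fin d) (Fin d) ℝ) :=
      {A | ∃ k : Fin d → ℝ, (∀ j, 0 ≤ k j ∧ k j ≤ 1) ∧ A = Matrix.diagonal k * Astar}
    ∀ᵐ ω ∂P,
      Tendsto (fun n => Metric.hausdorffDist (That n ω) Tstar) atTop (nhds 0) := by
  have : μ.IsOpenPosMeasure := ⟨fun U hU hne => (hsupp U hU hne).ne'⟩
  filter_upwards [ae_denseRange_of_iIndepFun hindep hdist] with ω hω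
  exact tendsto_hausdorffDist_of_antitone (antitone_empiricalFeasibleSet Astar _)
    (isClosed_empiricalFeasibleSet Astar _)
    (fun n => (convex_empiricalFeasibleSet Astar _ n).isPreconnected)
    (iInter_empiricalFeasibleSet hAinv hω) (isCompact_rowScalings Astar)
    ⟨0, zero_mem_rowScalings Astar⟩

theorem stmt17 (d : ℕ) (hd : 1 ≤ d)
    (Astar : Matrix (Fin d) (Fin d) ℝ)
    (hAnn : ∀ i j, 0 ≤ Astar i j) (hAinv : IsUnit Astar.det)
    (μ : Measure (Fin d → ℝ)) [IsProbabilityMeasure μ]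
    (hsupp : ∀ U : Set (Fin d → ℝ), IsOpen U → U.Nonempty → 0 < μ U)
    (Ω : Type) [MeasurableSpace Ω] (P : Measure Ω) [IsProbabilityMeasure P]
    (X : ℕ → Ω → (Fin d → ℝ)) (hmeas : ∀ n, Measurable (X n))
    (hindep : iIndepFun X P)
    (hdist : ∀ n, P.map (X n) = μ) :
    let That : ℕ → Ω → Set (Matrix (Fin d) (Fin d) ℝ) := fun n ω =>
      {A | ∀ i < n, ∀ j, A.mulVec (X i ω) j ≤ relu (Astar.mulVec (X i ω)) j}
    let Tstar : Set (Matrix (Fin d) (Fin d) ℝ) :=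
      {A | ∃ k : Fin d → ℝ, (∀ j, 0 ≤ k j ∧ k j ≤ 1) ∧ A = Matrix.diagonal k * Astar}
    ∀ᵐ ω ∂P,
      Tendsto (fun n => Metric.hausdorffDist (That n ω) Tstar) atTop (nhds 0) :=
  stmt17_general d Astar hAinv μ hsupp Ω P X hindep hdist
end

section
/- Let u^(1),…,u^(q) ∈ ℝ^d, v^(1),…,v^(r) ∈ ℝ^d, and c ∈ ℝ^q. Suppose that the vectors u^(1),…,u^(q) span ℝ^d and that every u^(i) lies in the conic hull of {−v^(1),…,−v^(r)}, i.e. for each i there exist λ_1,…,λ_r ≥ 0 with u^(i) = Σ_j λ_j·(−v^(j)). Then the polyhedron P = {a ∈ ℝ^d : ⟨a, u^(i)⟩ ≤ c_i for all i, and ⟨a, v^(j)⟩ ≤ 0 for all j} is a bounded subset of ℝ^d. -/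
theorem stmt18 (d q r : ℕ) (hd : 1 ≤ d)
    (u : Fin q → Fin d → ℝ) (v : Fin r → Fin d → ℝ) (c : Fin q → ℝ)
    (hspan : Submodule.span ℝ (Set.range u) = ⊤)
    (hconic : ∀ i : Fin q, ∃ lam : Fin r → ℝ,
      (∀ j, 0 ≤ lam j) ∧ u i = ∑ j, lam j • (-(v j)))
    :
    Bornology.IsBounded
      {a : Fin d → ℝ |
        (∀ i : Fin q, ∑ t, a t * u i t ≤ c i) ∧ (∀ j : Fin r, ∑ t, a t * v j t ≤ 0)} := by
  classical
  set T : (Fin d → ℝ) →ₗ[ℝ] (Fin q → ℝ) :=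
    { toFun := fun a i => ∑ t, a t * u i t
      map_add' := by
        intro a b; funext i
        simp [add_mul, Finset.sum_add_distrib]
      map_smul' := by
        intro s a; funext i
        simp [Finset.mul_sum, mul_assoc] } with hTdef
  have hTapp : ∀ a i, T a i = ∑ t, a t * u i t := fun a i => rfl
  have hinj : Function.Injective T := by
    rw [← LinearMap.ker_eq_bot, LinearMap.ker_eq_bot']
    intro w hw
    have hg : ∀ x : Fin d → ℝ, ∑ t, w t * x t = 0 := by
      intro x
      have hx : x ∈ Submodule.span ℝ (Set.range u) := by rw [hspan]; trivial
      induction hx using Submodule.span_induction with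
      | mem x hx =>
        obtain ⟨i, rfl⟩ := hx
        exact congrFun hw i
      | zero => simp
      | add x y _ _ hx hy =>
        simp [mul_add, Finset.sum_add_distrib, hx, hy]
      | smul s x _ hx =>
        simp only [Pi.smul_apply, smul_eq_mul]
        rw [show ∑ t, w t * (s * x t) = s * ∑ t, w t * x t by
          rw [Finset.mul_sum]; congr 1; funext t; ring]
        rw [hx, mul_zero]
    have hww := hg w
    funext t
    exact mul_self_eq_zero.mp
      ((Finset.sum_eq_zero_iff_of_nonneg (fun t _ => mul_self_nonneg (w t))).mp hww t
        (Finset.mem_univ t))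
  haveI : FiniteDimensional ℝ (Fin d → ℝ) := inferInstance
  let e := (LinearEquiv.ofInjective T hinj).toContinuousLinearEquiv
  have hK := e.antilipschitz
  set K := ‖(e.symm : LinearMap.range T →L[ℝ] (Fin d → ℝ))‖₊ with hKdef
  rw [isBounded_iff_forall_norm_le]
  refine ⟨(K : ℝ) * ‖c‖, fun a ha => ?_⟩
  obtain ⟨ha1, ha2⟩ := ha
  have hlow : ∀ i, 0 ≤ ∑ t, a t * u i t := by
    intro i
    obtain ⟨lam, hlam, hu⟩ := hconic i
    have hut : ∀ t, u i t = ∑ j, lam j * (-(v j t)) := by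
      intro t; rw [hu]; simp
    have : ∑ t, a t * u i t = ∑ j, lam j * (-(∑ t, a t * v j t)) := by
      simp_rw [hut, Finset.mul_sum]
      rw [Finset.sum_comm]
      congr 1; funext j
      rw [← Finset.sum_neg_distrib, Finset.mul_sum]
      congr 1; funext t; ring
    rw [this]
    exact Finset.sum_nonneg fun j _ =>
      mul_nonneg (hlam j) (by linarith [ha2 j])
  have hTa : ‖T a‖ ≤ ‖c‖ := by
    rw [pi_norm_le_iff_of_nonneg (norm_nonneg c)]
    intro i
    rw [Real.norm_eq_abs, hTapp]
    have h1 := hlow i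
    have h2 := ha1 i
    have h3 : |c i| ≤ ‖c‖ := by
      rw [← Real.norm_eq_abs]; exact norm_le_pi_norm c i
    rw [abs_of_nonneg h1]
    calc ∑ t, a t * u i t ≤ c i := h2
      _ ≤ |c i| := le_abs_self _
      _ ≤ ‖c‖ := h3
  have hcoe : ‖(e a : Fin q → ℝ)‖ = ‖T a‖ := by
    congr 1
  calc ‖a‖ = dist a 0 := (dist_zero_right a).symm
    _ ≤ (K : ℝ) * dist (e a) (e 0) := hK.le_mul_dist a 0
    _ = (K : ℝ) * ‖e a‖ := by rw [map_zero, dist_zero_right]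
    _ = (K : ℝ) * ‖T a‖ := by rw [show ‖e a‖ = ‖(e a : Fin q → ℝ)‖ from rfl, hcoe]
    _ ≤ (K : ℝ) * ‖c‖ := by
        exact mul_le_mul_of_nonneg_left hTa (K.coe_nonneg)
end
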